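/- Suppose θ = 1/(1+b) and the errors satisfy the variance-free recursion E[e_{i+1}² − (1−θ)e_i²] ≤ L²((1−θ)/b)·E[‖s_i‖²] for all i, with e_0 = 0. Then for every k ≥ 1, (1/k) ∑_{i=0}^{k−1} E[‖∇f(x_i)‖] ≤ (2/k) · (∑_{i=0}^{k−1} λ_i)^{1/p} · (2Δ + 4L ∑_{i=0}^{k−1} (4L/λ_i)^{2/(p−2)})^{(p−1)/p}, for any choice of positive parameters λ_0, …, λ_{k−1}. -/

import Mathlib

/-!
The regularized step satisfies `‖g_k‖ = λ_k ‖s_k‖^(p-1)` and `⟪g_k, s_k⟫ = -λ_k ‖s_k‖^p`, so the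
descent lemma for the `L`-smooth `f` gives
`E f(x_{k+1}) ≤ E f(x_k) - λ_k E‖s_k‖^p + E e_k² / (2L) + L E‖s_k‖²`.
Adding `1/(Lθ)` times the error recursion (where `(1-θ)/b = θ`), the Lyapunov function
`2 E f(x_k) + 2 E e_k² / (Lθ)` decreases by at least `λ_k E‖s_k‖^p + E e_k² / L`, up to the
price `4L (4L/λ_k)^(2/(p-2))` of absorbing `2L ‖s_k‖²` into `λ_k/2 ‖s_k‖^p` (Young).
Telescoping bounds `∑ (λ_i E‖s_i‖^p + E e_i² / L)` by `B = 2Δ + 4L ∑ (4L/λ_i)^(2/(p-2))`.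
Finally `E‖∇f(x_i)‖ ≤ λ_i (E‖s_i‖^p)^((p-1)/p) + (E e_i²)^(1/2)` by Jensen, and Hölder with
weights `λ_i`, resp. Cauchy–Schwarz, bounds each of the two resulting sums by
`(∑ λ_i)^(1/p) B^((p-1)/p)`.
-/

open scoped Classical
open MeasureTheory

open scoped RealInnerProductSpace

section Deterministic

variable {E : Type*} [NormedAddCommGroup E] [InnerProductSpace ℝ E]

theorem image_add_le_of_lipschitz_gradient [CompleteSpace E] {f : E → ℝ} {f' : E → E}
    (hf : ∀ y, HasGradientAt f (f' y) y) {L : ℝ} (hlip : ∀ y z, ‖f' y - f' z‖ ≤ L * ‖y - z‖)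
    (y v : E) : f (y + v) ≤ f y + ⟪f' y, v⟫ + L / 2 * ‖v‖ ^ 2 := by
  set φ : ℝ → ℝ := fun t => f (y + t • v) - t * ⟪f' y, v⟫ - t ^ 2 * (L / 2 * ‖v‖ ^ 2)
  have hφ : ∀ t, HasDerivAt φ (⟪f' (y + t • v) - f' y, v⟫ - t * (L * ‖v‖ ^ 2)) t := by
    intro t
    have hline : HasDerivAt (fun t : ℝ => y + t • v) v t := by
      simpa using ((hasDerivAt_id t).smul_const v).const_add y
    have hf_line : HasDerivAt (fun t : ℝ => f (y + t • v)) ⟪f' (y + t • v), v⟫ t := by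
      exact (hf (y + t • v)).hasFDerivAt.comp_hasDerivAt t hline
    refine ((hf_line.sub ((hasDerivAt_id t).mul_const ⟪f' y, v⟫)).sub
      ((hasDerivAt_pow 2 t).mul_const (L / 2 * ‖v‖ ^ 2))).congr_deriv ?_
    rw [inner_sub_left]
    simp only [Nat.cast_ofNat]
    ring
  have hanti : AntitoneOn φ (Set.Icc 0 1) := by
    refine antitoneOn_of_hasDerivWithinAt_nonpos (convex_Icc 0 1)
      (fun t _ => (hφ t).continuousAt.continuousWithinAt)
      (fun t _ => (hφ t).hasDerivWithinAt) fun t ht => ?_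
    rw [interior_Icc] at ht
    have hgrowth : ⟪f' (y + t • v) - f' y, v⟫ ≤ t * (L * ‖v‖ ^ 2) :=
      calc ⟪f' (y + t • v) - f' y, v⟫ ≤ ‖f' (y + t • v) - f' y‖ * ‖v‖ := real_inner_le_norm _ _
        _ ≤ L * ‖t • v‖ * ‖v‖ := by
          gcongr
          simpa using hlip (y + t • v) y
        _ = t * (L * ‖v‖ ^ 2) := by rw [norm_smul, Real.norm_of_nonneg ht.1.le]; ring
    linarith
  have := hanti (Set.left_mem_Icc.2 zero_le_one) (Set.right_mem_Icc.2 zero_le_one) zero_le_one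
  norm_num [φ] at this
  linarith

/-- The minimizer of `s ↦ ⟪v, s⟫ + lam / p * ‖s‖ ^ p`. -/
noncomputable def regularizedStep (lam p : ℝ) (v : E) : E :=
  if v = 0 then 0 else -((lam * ‖v‖ ^ (p - 2)) ^ (-(1 : ℝ) / (p - 1))) • v

variable {lam p : ℝ}

theorem norm_eq_mul_norm_regularizedStep_rpow (hp : 1 < p) (hlam : 0 < lam) (v : E) :
    ‖v‖ = lam * ‖regularizedStep lam p v‖ ^ (p - 1) := by
  unfold regularizedStep
  split_ifs with hv
  · simp [hv, Real.zero_rpow (sub_pos.2 hp).ne']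
  have hv0 : 0 < ‖v‖ := norm_pos_iff.2 hv
  have hbase : 0 < lam * ‖v‖ ^ (p - 2) := by positivity
  rw [norm_smul, norm_neg, Real.norm_of_nonneg (by positivity),
    Real.mul_rpow (by positivity) hv0.le, ← Real.rpow_mul hbase.le,
    show -(1 : ℝ) / (p - 1) * (p - 1) = -1 by field_simp [(sub_pos.2 hp).ne'],
    Real.rpow_neg_one, show p - 1 = p - 2 + 1 by ring, Real.rpow_add_one hv0.ne']
  field_simp

theorem inner_regularizedStep (hp : 1 < p) (hlam : 0 < lam) (v : E) :
    ⟪v, regularizedStep lam p v⟫ = -(lam * ‖regularizedStep lam p v‖ ^ p) := by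
  have hnorm := norm_eq_mul_norm_regularizedStep_rpow hp hlam v
  by_cases hv : v = 0
  · simp [regularizedStep, hv, Real.zero_rpow (by linarith : p ≠ 0)]
  have hv0 : 0 < ‖v‖ := norm_pos_iff.2 hv
  simp only [regularizedStep, if_neg hv] at hnorm ⊢
  set c := (lam * ‖v‖ ^ (p - 2)) ^ (-(1 : ℝ) / (p - 1))
  have hc : 0 < c := by positivity
  have hsn : ‖-c • v‖ = c * ‖v‖ := by rw [norm_smul, norm_neg, Real.norm_of_nonneg hc.le]
  rw [show p = p - 1 + 1 by ring, Real.rpow_add_one (by rw [hsn]; positivity), ← mul_assoc,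
    ← hnorm, inner_smul_right, real_inner_self_eq_norm_sq, hsn]
  ring

theorem image_add_regularizedStep_le [CompleteSpace E] {f : E → ℝ} {f' : E → E}
    (hf : ∀ y, HasGradientAt f (f' y) y) {L : ℝ} (hL : 0 < L)
    (hlip : ∀ y z, ‖f' y - f' z‖ ≤ L * ‖y - z‖) (hp : 1 < p) (hlam : 0 < lam) (y g : E) :
    f (y + regularizedStep lam p g) ≤ f y - lam * ‖regularizedStep lam p g‖ ^ p +
      ‖g - f' y‖ ^ 2 / (2 * L) + L * ‖regularizedStep lam p g‖ ^ 2 := by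
  set s := regularizedStep lam p g
  have hdescent := image_add_le_of_lipschitz_gradient hf hlip y s
  have hcross : ⟪f' y, s⟫ ≤ -(lam * ‖s‖ ^ p) + ‖g - f' y‖ * ‖s‖ := by
    have hsplit : ⟪f' y, s⟫ = ⟪g, s⟫ - ⟪g - f' y, s⟫ := by rw [inner_sub_left]; ring
    rw [hsplit, inner_regularizedStep hp hlam g]
    linarith [neg_le_abs ⟪g - f' y, s⟫, abs_real_inner_le_norm (g - f' y) s]
  have hyoung : ‖g - f' y‖ * ‖s‖ ≤ ‖g - f' y‖ ^ 2 / (2 * L) + L / 2 * ‖s‖ ^ 2 := by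
    have : 0 ≤ (‖g - f' y‖ - L * ‖s‖) ^ 2 / (2 * L) := by positivity
    field_simp at this ⊢
    nlinarith [this]
  linarith

theorem mul_sq_le_mul_rpow_add {a c t : ℝ} (hp : 2 < p) (ha : 0 ≤ a) (hc : 0 < c) (ht : 0 ≤ t) :
    a * t ^ 2 ≤ c * t ^ p + a * (a / c) ^ (2 / (p - 2)) := by
  have hp2 : 0 < p - 2 := by linarith
  have hK : 0 ≤ a * (a / c) ^ (2 / (p - 2)) := by positivity
  rcases ht.eq_or_lt with rfl | ht0
  · simp [Real.zero_rpow (by linarith : p ≠ 0), hK]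
  rcases le_or_gt (a / c) (t ^ (p - 2)) with hlarge | hsmall
  · have : a * t ^ 2 ≤ c * t ^ p := by
      rw [div_le_iff₀ hc] at hlarge
      rw [show p = p - 2 + 2 by ring, Real.rpow_add ht0, Real.rpow_two]
      nlinarith [sq_nonneg t]
    linarith
  · have : t ^ 2 ≤ (a / c) ^ (2 / (p - 2)) := by
      calc t ^ 2 = (t ^ (p - 2)) ^ (2 / (p - 2)) := by
            rw [← Real.rpow_mul ht, mul_div_cancel₀ _ hp2.ne', Real.rpow_two]
        _ ≤ (a / c) ^ (2 / (p - 2)) := by gcongr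
    nlinarith [Real.rpow_nonneg ht p]

end Deterministic

theorem lyapunov_step {F F' A V u u' lam K L θ c : ℝ} (hL : 0 < L) (hθ : 0 < θ) (hc : c ≤ θ)
    (hV : 0 ≤ V) (hdescent : F' ≤ F - lam * A + u / (2 * L) + L * V)
    (hrec : u' ≤ (1 - θ) * u + L ^ 2 * c * V) (hyoung : 2 * L * V ≤ lam / 2 * A + K) :
    2 * F' + 2 * u' / (L * θ) + (lam * A + u / L) ≤ 2 * F + 2 * u / (L * θ) + 2 * K := by
  have herr : 2 * u' / (L * θ) ≤ 2 * u / (L * θ) - 2 * u / L + 2 * L * V := by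
    have : L ^ 2 * c * V ≤ L ^ 2 * θ * V := by gcongr
    rw [div_le_iff₀ (by positivity)]
    field_simp
    nlinarith
  linear_combination 2 * hdescent + herr + 2 * hyoung

section Expectation

variable {Ω : Type*} [MeasurableSpace Ω] {μ : Measure Ω}

theorem integrable_rpow_of_le_one [IsFiniteMeasure μ] {Y : Ω → ℝ} (hY : ∀ ω, 0 ≤ Y ω)
    (hYi : Integrable Y μ) {r : ℝ} (hr0 : 0 ≤ r) (hr1 : r ≤ 1) :
    Integrable (fun ω => Y ω ^ r) μ := by
  refine ((integrable_const 1).add hYi).mono'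
    ((Real.continuous_rpow_const hr0).comp_aestronglyMeasurable hYi.aestronglyMeasurable) ?_
  refine Filter.Eventually.of_forall fun ω => ?_
  rw [Real.norm_of_nonneg (Real.rpow_nonneg (hY ω) r), Pi.add_apply]
  rcases le_or_gt (Y ω) 1 with hle | hgt
  · linarith [Real.rpow_le_one (hY ω) hle hr0, hY ω]
  · have := Real.rpow_le_rpow_of_exponent_le hgt.le hr1
    rw [Real.rpow_one] at this
    linarith

theorem integral_rpow_le_rpow_integral [IsProbabilityMeasure μ] {Y : Ω → ℝ} (hY : ∀ ω, 0 ≤ Y ω)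
    (hYi : Integrable Y μ) {r : ℝ} (hr0 : 0 ≤ r) (hr1 : r ≤ 1) :
    ∫ ω, Y ω ^ r ∂μ ≤ (∫ ω, Y ω ∂μ) ^ r :=
  (Real.concaveOn_rpow hr0 hr1).le_map_integral (Real.continuous_rpow_const hr0).continuousOn
    isClosed_Ici (Filter.Eventually.of_forall hY) hYi (integrable_rpow_of_le_one hY hYi hr0 hr1)

theorem mul_integral_sq_le [IsProbabilityMeasure μ] {X : Ω → ℝ} {a c p : ℝ} (hp : 2 < p)
    (ha : 0 ≤ a) (hc : 0 < c) (hX : ∀ ω, 0 ≤ X ω) (hX2 : Integrable (fun ω => X ω ^ 2) μ)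
    (hXp : Integrable (fun ω => X ω ^ p) μ) :
    a * ∫ ω, X ω ^ 2 ∂μ ≤ c * ∫ ω, X ω ^ p ∂μ + a * (a / c) ^ (2 / (p - 2)) := by
  rw [← integral_const_mul, ← integral_const_mul]
  calc ∫ ω, a * X ω ^ 2 ∂μ ≤ ∫ ω, (c * X ω ^ p + a * (a / c) ^ (2 / (p - 2))) ∂μ :=
        integral_mono (hX2.const_mul a) ((hXp.const_mul c).add (integrable_const _))
          fun ω => mul_sq_le_mul_rpow_add hp ha hc (hX ω)
    _ = _ := by rw [integral_add (hXp.const_mul c) (integrable_const _)]; simp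

variable {E : Type*} [NormedAddCommGroup E] [InnerProductSpace ℝ E] {lam p : ℝ}

theorem integral_image_add_regularizedStep_le [CompleteSpace E] {f : E → ℝ} {f' : E → E}
    (hf : ∀ y, HasGradientAt f (f' y) y) {L : ℝ} (hL : 0 < L)
    (hlip : ∀ y z, ‖f' y - f' z‖ ≤ L * ‖y - z‖) (hp : 1 < p) (hlam : 0 < lam) {y y' g : Ω → E}
    (hy' : ∀ ω, y' ω = y ω + regularizedStep lam p (g ω))
    (hfy : Integrable (fun ω => f (y ω)) μ) (hfy' : Integrable (fun ω => f (y' ω)) μ)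
    (he : Integrable (fun ω => ‖g ω - f' (y ω)‖ ^ 2) μ)
    (hs2 : Integrable (fun ω => ‖regularizedStep lam p (g ω)‖ ^ 2) μ)
    (hsp : Integrable (fun ω => ‖regularizedStep lam p (g ω)‖ ^ p) μ) :
    ∫ ω, f (y' ω) ∂μ ≤ ∫ ω, f (y ω) ∂μ - lam * ∫ ω, ‖regularizedStep lam p (g ω)‖ ^ p ∂μ +
      (∫ ω, ‖g ω - f' (y ω)‖ ^ 2 ∂μ) / (2 * L) +
      L * ∫ ω, ‖regularizedStep lam p (g ω)‖ ^ 2 ∂μ := by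
  have hi₁ : Integrable (fun ω => f (y ω) - lam * ‖regularizedStep lam p (g ω)‖ ^ p) μ :=
    hfy.sub (hsp.const_mul lam)
  have hi₂ : Integrable (fun ω => ‖g ω - f' (y ω)‖ ^ 2 / (2 * L)) μ := he.div_const _
  have hi₃ : Integrable (fun ω => f (y ω) - lam * ‖regularizedStep lam p (g ω)‖ ^ p +
      ‖g ω - f' (y ω)‖ ^ 2 / (2 * L)) μ := hi₁.add hi₂
  have hle : ∫ ω, f (y' ω) ∂μ ≤ ∫ ω, (f (y ω) - lam * ‖regularizedStep lam p (g ω)‖ ^ p +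
      ‖g ω - f' (y ω)‖ ^ 2 / (2 * L) + L * ‖regularizedStep lam p (g ω)‖ ^ 2) ∂μ :=
    integral_mono hfy' (hi₃.add (hs2.const_mul L))
      fun ω => hy' ω ▸ image_add_regularizedStep_le hf hL hlip hp hlam _ _
  rwa [integral_add hi₃ (hs2.const_mul L), integral_add hi₁ hi₂,
    integral_sub hfy (hsp.const_mul lam), integral_const_mul, integral_const_mul,
    integral_div] at hle

theorem integral_norm_le_of_regularizedStep [IsProbabilityMeasure μ] (hp : 1 < p)
    (hlam : 0 < lam) {G g : Ω → E} (hG : Integrable (fun ω => ‖G ω‖) μ)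
    (he : Integrable (fun ω => ‖g ω - G ω‖ ^ 2) μ)
    (hsp : Integrable (fun ω => ‖regularizedStep lam p (g ω)‖ ^ p) μ) :
    ∫ ω, ‖G ω‖ ∂μ ≤ lam * (∫ ω, ‖regularizedStep lam p (g ω)‖ ^ p ∂μ) ^ ((p - 1) / p) +
      √(∫ ω, ‖g ω - G ω‖ ^ 2 ∂μ) := by
  have hr0 : 0 ≤ (p - 1) / p := div_nonneg (by linarith) (by linarith)
  have hr1 : (p - 1) / p ≤ 1 := by rw [div_le_one (by linarith)]; linarith
  have hnonneg : ∀ ω, 0 ≤ ‖regularizedStep lam p (g ω)‖ ^ p := fun ω => by positivity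
  have hpointwise : ∀ ω, ‖G ω‖ ≤ lam * (‖regularizedStep lam p (g ω)‖ ^ p) ^ ((p - 1) / p) +
      (‖g ω - G ω‖ ^ 2) ^ (1 / 2 : ℝ) := fun ω => by
    rw [← Real.rpow_mul (norm_nonneg _), mul_div_cancel₀ _ (by linarith : p ≠ 0),
      ← norm_eq_mul_norm_regularizedStep_rpow hp hlam, ← Real.sqrt_eq_rpow,
      Real.sqrt_sq (norm_nonneg _)]
    calc ‖G ω‖ = ‖g ω - (g ω - G ω)‖ := by rw [sub_sub_cancel]
      _ ≤ ‖g ω‖ + ‖g ω - G ω‖ := norm_sub_le _ _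
  have hi1 := (integrable_rpow_of_le_one hnonneg hsp hr0 hr1).const_mul lam
  have hi2 := integrable_rpow_of_le_one (fun ω => sq_nonneg ‖g ω - G ω‖) he
    (by norm_num : (0 : ℝ) ≤ 1 / 2) (by norm_num)
  calc ∫ ω, ‖G ω‖ ∂μ ≤ ∫ ω, (lam * (‖regularizedStep lam p (g ω)‖ ^ p) ^ ((p - 1) / p) +
        (‖g ω - G ω‖ ^ 2) ^ (1 / 2 : ℝ)) ∂μ := integral_mono hG (hi1.add hi2) hpointwise
    _ ≤ _ := by
      rw [integral_add hi1 hi2, integral_const_mul, Real.sqrt_eq_rpow]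
      gcongr
      · exact integral_rpow_le_rpow_integral hnonneg hsp hr0 hr1
      · exact integral_rpow_le_rpow_integral (fun ω => sq_nonneg _) he (by norm_num) (by norm_num)

theorem integral_lyapunov_step [IsProbabilityMeasure μ] [CompleteSpace E] {f : E → ℝ}
    {f' : E → E} (hf : ∀ y, HasGradientAt f (f' y) y) {L : ℝ} (hL : 0 < L)
    (hlip : ∀ y z, ‖f' y - f' z‖ ≤ L * ‖y - z‖) (hp : 2 < p) (hlam : 0 < lam) {θ c : ℝ}
    (hθ : 0 < θ) (hc : c ≤ θ) {y y' g g' : Ω → E}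
    (hy' : ∀ ω, y' ω = y ω + regularizedStep lam p (g ω))
    (herr : ∫ ω, (‖g' ω - f' (y' ω)‖ ^ 2 - (1 - θ) * ‖g ω - f' (y ω)‖ ^ 2) ∂μ ≤
      L ^ 2 * c * ∫ ω, ‖regularizedStep lam p (g ω)‖ ^ 2 ∂μ)
    (hfy : Integrable (fun ω => f (y ω)) μ) (hfy' : Integrable (fun ω => f (y' ω)) μ)
    (he : Integrable (fun ω => ‖g ω - f' (y ω)‖ ^ 2) μ)
    (he' : Integrable (fun ω => ‖g' ω - f' (y' ω)‖ ^ 2) μ)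
    (hs2 : Integrable (fun ω => ‖regularizedStep lam p (g ω)‖ ^ 2) μ)
    (hsp : Integrable (fun ω => ‖regularizedStep lam p (g ω)‖ ^ p) μ) :
    2 * (∫ ω, f (y' ω) ∂μ) + 2 * (∫ ω, ‖g' ω - f' (y' ω)‖ ^ 2 ∂μ) / (L * θ) +
        (lam * (∫ ω, ‖regularizedStep lam p (g ω)‖ ^ p ∂μ) + (∫ ω, ‖g ω - f' (y ω)‖ ^ 2 ∂μ) / L) ≤
      2 * (∫ ω, f (y ω) ∂μ) + 2 * (∫ ω, ‖g ω - f' (y ω)‖ ^ 2 ∂μ) / (L * θ) +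
        4 * L * (4 * L / lam) ^ (2 / (p - 2)) := by
  rw [integral_sub he' (he.const_mul _), integral_const_mul] at herr
  have hyoung := mul_integral_sq_le hp (by positivity : 0 ≤ 2 * L) (half_pos hlam)
    (fun ω => norm_nonneg _) hs2 hsp
  rw [show 2 * L / (lam / 2) = 4 * L / lam by ring] at hyoung
  have := lyapunov_step (u' := ∫ ω, ‖g' ω - f' (y' ω)‖ ^ 2 ∂μ) hL hθ hc
    (integral_nonneg fun ω => by positivity)
    (integral_image_add_regularizedStep_le hf hL hlip (by linarith) hlam hy' hfy hfy' he hs2 hsp)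
    (by linarith) hyoung
  linarith

end Expectation

theorem sum_range_le_sub_add_sum_of_succ_le {Φ d c : ℕ → ℝ} (h : ∀ i, Φ (i + 1) + d i ≤ Φ i + c i)
    (n : ℕ) : ∑ i ∈ Finset.range n, d i ≤ Φ 0 - Φ n + ∑ i ∈ Finset.range n, c i := by
  induction n with
  | zero => simp
  | succ n ih =>
    rw [Finset.sum_range_succ, Finset.sum_range_succ]
    linarith [h n]

section Sums

variable {ι : Type*} {s : Finset ι}

theorem sum_mul_rpow_le_of_le_one {w a : ι → ℝ} (hw : ∀ i, 0 ≤ w i) (ha : ∀ i, 0 ≤ a i) {r : ℝ}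
    (hr0 : 0 < r) (hr1 : r ≤ 1) :
    ∑ i ∈ s, w i * a i ^ r ≤ (∑ i ∈ s, w i) ^ (1 - r) * (∑ i ∈ s, w i * a i) ^ r := by
  have := Real.inner_le_weight_mul_Lp_of_nonneg s (one_le_inv₀ hr0 |>.2 hr1) w (fun i => a i ^ r) hw
    fun i => Real.rpow_nonneg (ha i) r
  simpa only [inv_inv, ← Real.rpow_mul (ha _), mul_inv_cancel₀ hr0.ne', Real.rpow_one] using this

variable {p : ℝ}

theorem mul_card_le_rpow_mul_rpow {w : ι → ℝ} (hw : ∀ i, 0 < w i) {M : ℝ} (hM : 0 < M)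
    (hp : 2 < p) :
    M * s.card ≤ (∑ i ∈ s, w i) ^ (2 / p) *
      (M * ∑ i ∈ s, (M / w i) ^ (2 / (p - 2))) ^ ((p - 2) / p) := by
  have hp2 : 0 < p - 2 := by linarith
  have hp0 : 0 < p := by linarith
  have := sum_mul_rpow_le_of_le_one (s := s) (fun i => (hw i).le)
    (fun i => (Real.rpow_pos_of_pos (div_pos hM (hw i)) (p / (p - 2))).le)
    (div_pos hp2 hp0) (div_le_one_of_le₀ (by linarith) hp0.le)
  have hroot : ∀ i, w i * ((M / w i) ^ (p / (p - 2))) ^ ((p - 2) / p) = M := fun i => by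
    rw [← Real.rpow_mul (div_pos hM (hw i)).le,
      (div_mul_div_cancel₀ hp2.ne').trans (div_self hp0.ne'), Real.rpow_one,
      mul_div_cancel₀ _ (hw i).ne']
  have hpow : ∀ i, w i * (M / w i) ^ (p / (p - 2)) = M * (M / w i) ^ (2 / (p - 2)) := fun i => by
    rw [show p / (p - 2) = 2 / (p - 2) + 1 by field_simp; ring,
      Real.rpow_add_one (div_pos hM (hw i)).ne', mul_comm, mul_assoc, div_mul_cancel₀ _ (hw i).ne',
      mul_comm]
  simp only [hroot, hpow, ← Finset.mul_sum, Finset.sum_const, nsmul_eq_mul,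
    show 1 - (p - 2) / p = 2 / p by field_simp; ring] at this
  linarith

theorem sum_mul_rpow_add_sqrt_le {lam a u : ι → ℝ} {L B : ℝ} (hL : 0 < L) (hp : 2 < p)
    (hlam : ∀ i, 0 < lam i) (ha : ∀ i, 0 ≤ a i) (hu : ∀ i, 0 ≤ u i)
    (hB : ∑ i ∈ s, (lam i * a i + u i / L) ≤ B)
    (hBK : 4 * L * ∑ i ∈ s, (4 * L / lam i) ^ (2 / (p - 2)) ≤ B) :
    ∑ i ∈ s, (lam i * a i ^ ((p - 1) / p) + √(u i)) ≤
      2 * (∑ i ∈ s, lam i) ^ (1 / p) * B ^ ((p - 1) / p) := by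
  have hp0 : 0 < p := by linarith
  set T := ∑ i ∈ s, lam i
  set M := T ^ (1 / p) * B ^ ((p - 1) / p)
  have hT : 0 ≤ T := Finset.sum_nonneg fun i _ => (hlam i).le
  have hlama : ∑ i ∈ s, lam i * a i ≤ B := by
    refine le_trans (Finset.sum_le_sum fun i _ => ?_) hB
    linarith [div_nonneg (hu i) hL.le]
  have hsumu : ∑ i ∈ s, u i ≤ L * B := by
    rw [← div_le_iff₀' hL, Finset.sum_div]
    refine le_trans (Finset.sum_le_sum fun i _ => ?_) hB
    linarith [mul_nonneg (hlam i).le (ha i)]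
  have hB0 : 0 ≤ B := le_trans (Finset.sum_nonneg fun i _ => mul_nonneg (hlam i).le (ha i)) hlama
  have hM : 0 ≤ M := by positivity
  have hholder : ∑ i ∈ s, lam i * a i ^ ((p - 1) / p) ≤ M := by
    have := sum_mul_rpow_le_of_le_one (s := s) (r := (p - 1) / p) (fun i => (hlam i).le) ha
      (div_pos (by linarith) hp0) (div_le_one_of_le₀ (by linarith) hp0.le)
    rw [show 1 - (p - 1) / p = 1 / p by field_simp; ring] at this
    refine this.trans (mul_le_mul_of_nonneg_left ?_ (by positivity))
    exact Real.rpow_le_rpow (Finset.sum_nonneg fun i _ => mul_nonneg (hlam i).le (ha i)) hlama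
      (div_nonneg (by linarith) hp0.le)
  have hK : 0 ≤ 4 * L * ∑ i ∈ s, (4 * L / lam i) ^ (2 / (p - 2)) := mul_nonneg (by positivity)
    (Finset.sum_nonneg fun i _ => Real.rpow_nonneg (div_pos (by positivity) (hlam i)).le _)
  have hcard := mul_card_le_rpow_mul_rpow (s := s) hlam (by positivity : 0 < 4 * L) hp
  have hsqrt : (∑ i ∈ s, √(u i)) ^ 2 ≤ M ^ 2 := by
    have hM2 : M ^ 2 = T ^ (2 / p) * B ^ ((p - 2) / p) * B := by
      rw [mul_pow, ← Real.rpow_mul_natCast hT, ← Real.rpow_mul_natCast hB0, mul_assoc,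
        ← Real.rpow_add_one' hB0
        (add_pos_of_nonneg_of_pos (div_nonneg (by linarith) hp0.le) one_pos).ne']
      congr 2 <;> field_simp <;> ring
    calc (∑ i ∈ s, √(u i)) ^ 2 ≤ s.card * ∑ i ∈ s, √(u i) ^ 2 := sq_sum_le_card_mul_sum_sq
      _ = s.card * ∑ i ∈ s, u i := by simp only [Real.sq_sqrt (hu _)]
      _ ≤ s.card * (L * B) := by gcongr
      _ = 4 * L * s.card * B / 4 := by ring
      _ ≤ T ^ (2 / p) * B ^ ((p - 2) / p) * B / 4 := by
        gcongr ?_ * B / 4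
        exact hcard.trans (mul_le_mul_of_nonneg_left
          (Real.rpow_le_rpow hK hBK (div_nonneg (by linarith) hp0.le)) (by positivity))
      _ ≤ M ^ 2 := by
        rw [hM2]
        linarith [show 0 ≤ T ^ (2 / p) * B ^ ((p - 2) / p) * B by positivity]
  linarith [Finset.sum_add_distrib (s := s) (f := fun i => lam i * a i ^ ((p - 1) / p))
    (g := fun i => √(u i)), abs_le_of_sq_le_sq' hsqrt hM]

end Sums

theorem one_sub_div_natCast_le {b : ℕ} {θ : ℝ} (hθ : θ = 1 / (1 + b)) : (1 - θ) / b ≤ θ := by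
  rcases Nat.eq_zero_or_pos b with rfl | hb
  · simp [hθ] -- `(1 - θ) / 0 = 0`
  · rw [hθ]; field_simp; linarith

theorem hor_page_rate_general_exact_general
    {E : Type*} [NormedAddCommGroup E] [InnerProductSpace ℝ E] [CompleteSpace E]
    {Ω : Type*} [MeasureSpace Ω] [IsProbabilityMeasure (volume : Measure Ω)]
    (f : E → ℝ) (f' : E → E)
    (hf : ∀ y, HasGradientAt f (f' y) y)
    (L : ℝ) (hL : 0 < L)
    (hlip : ∀ y z, ‖f' y - f' z‖ ≤ L * ‖y - z‖)
    (hbdd : BddBelow (Set.range f))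
    (p : ℝ) (hp : 2 < p)
    (lam : ℕ → ℝ) (hlam : ∀ k, 0 < lam k)
    (b : ℕ)
    (θ : ℝ)
    (hθ : θ = 1 / (1 + (b : ℝ)))
    (x₀ : E) (Δ : ℝ) (hΔ : Δ = f x₀ - ⨅ y, f y)
    (x g s : ℕ → Ω → E)
    (hx0 : ∀ ω, x 0 ω = x₀)
    (hs : ∀ k ω, s k ω = if g k ω = 0 then 0
      else -((lam k * ‖g k ω‖ ^ (p - 2)) ^ (-(1 : ℝ) / (p - 1))) • g k ω)
    (hx : ∀ k ω, x (k + 1) ω = x k ω + s k ω)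
    -- variance-free PAGE error recursion with `e_k := ‖g_k − ∇f(x_k)‖`
    (herr : ∀ i, (∫ ω, (‖g (i + 1) ω - f' (x (i + 1) ω)‖ ^ 2 -
          (1 - θ) * ‖g i ω - f' (x i ω)‖ ^ 2)) ≤
        L ^ 2 * ((1 - θ) / (b : ℝ)) * ∫ ω, ‖s i ω‖ ^ 2)
    (herr0 : ∀ ω, ‖g 0 ω - f' (x 0 ω)‖ = 0)
    -- all expectations appearing are assumed finite
    (hint_f : ∀ k, Integrable fun ω => f (x k ω))
    (hint_grad : ∀ k, Integrable fun ω => ‖f' (x k ω)‖)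
    (hint_err : ∀ k, Integrable fun ω => ‖g k ω - f' (x k ω)‖ ^ 2)
    (hint_s2 : ∀ k, Integrable fun ω => ‖s k ω‖ ^ 2)
    (hint_s : ∀ k, Integrable fun ω => ‖s k ω‖ ^ p)
    (k : ℕ) :
    (1 / (k : ℝ)) * ∑ i ∈ Finset.range k, ∫ ω, ‖f' (x i ω)‖ ≤
      2 / (k : ℝ) * (∑ i ∈ Finset.range k, lam i) ^ ((1 : ℝ) / p) *
        (2 * Δ + 4 * L * ∑ i ∈ Finset.range k, (4 * L / lam i) ^ (2 / (p - 2))) ^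
          ((p - 1) / p) := by
  obtain rfl : s = fun k ω => regularizedStep (lam k) p (g k ω) := funext fun k => funext (hs k)
  beta_reduce at hx herr hint_s2 hint_s
  have hθ0 : 0 < θ := by rw [hθ]; positivity
  set u : ℕ → ℝ := fun i => ∫ ω, ‖g i ω - f' (x i ω)‖ ^ 2
  set A : ℕ → ℝ := fun i => ∫ ω, ‖regularizedStep (lam i) p (g i ω)‖ ^ p
  have hstep : ∀ i, 2 * (∫ ω, f (x (i + 1) ω)) + 2 * u (i + 1) / (L * θ) +
      (lam i * A i + u i / L) ≤
        2 * (∫ ω, f (x i ω)) + 2 * u i / (L * θ) + 4 * L * (4 * L / lam i) ^ (2 / (p - 2)) :=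
    fun i => integral_lyapunov_step hf hL hlip hp (hlam i) hθ0
      (one_sub_div_natCast_le hθ) (hx i) (herr i) (hint_f i)
      (hint_f (i + 1)) (hint_err i) (hint_err (i + 1)) (hint_s2 i) (hint_s i)
  have hu_nonneg : ∀ i, 0 ≤ u i := fun i => integral_nonneg fun ω => by positivity
  have hsum : ∑ i ∈ Finset.range k, (lam i * A i + u i / L) ≤
      2 * Δ + 4 * L * ∑ i ∈ Finset.range k, (4 * L / lam i) ^ (2 / (p - 2)) := by
    have htel := sum_range_le_sub_add_sum_of_succ_le
      (Φ := fun i => 2 * (∫ ω, f (x i ω)) + 2 * u i / (L * θ)) hstep k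
    have hu0 : u 0 = 0 := by simp [u, herr0]
    simp only [hx0, hu0, integral_const, probReal_univ, smul_eq_mul, one_mul, mul_zero, zero_div,
      ← Finset.mul_sum] at htel
    have hinf : ⨅ y, f y ≤ ∫ ω, f (x k ω) := by
      simpa using integral_mono (integrable_const _) (hint_f k) fun ω => ciInf_le hbdd (x k ω)
    have huk : 0 ≤ 2 * u k / (L * θ) := by have := hu_nonneg k; positivity
    linarith
  have hΔ0 : 0 ≤ Δ := hΔ ▸ sub_nonneg.2 (ciInf_le hbdd x₀)
  have hbound := (Finset.sum_le_sum fun i _ => integral_norm_le_of_regularizedStep (by linarith)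
    (hlam i) (hint_grad i) (hint_err i) (hint_s i)).trans
    (sum_mul_rpow_add_sqrt_le hL hp hlam (fun i => integral_nonneg fun ω => by positivity)
      hu_nonneg hsum (by linarith))
  exact (mul_le_mul_of_nonneg_left hbound (by positivity : (0 : ℝ) ≤ 1 / (k : ℝ))).trans_eq
    (by ring)

/-- General expected gradient-norm bound for higher-order regularized PAGE with
exact refresh (variance-free error recursion, `e_0 = 0`): with `θ = 1/(1+b)`,
for all `k ≥ 1`, `(1/k) ∑_{i<k} E‖∇f(x_i)‖ ≤
(2/k) (∑_{i<k} λ_i)^{1/p} (2Δ + 4L ∑_{i<k} (4L/λ_i)^{2/(p-2)})^{(p-1)/p}`. -/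
theorem hor_page_rate_general_exact
    {E : Type*} [NormedAddCommGroup E] [InnerProductSpace ℝ E] [CompleteSpace E]
    {Ω : Type*} [MeasureSpace Ω] [IsProbabilityMeasure (volume : Measure Ω)]
    (f : E → ℝ) (f' : E → E)
    (hf : ∀ y, HasGradientAt f (f' y) y)
    (L : ℝ) (hL : 0 < L)
    (hlip : ∀ y z, ‖f' y - f' z‖ ≤ L * ‖y - z‖)
    (hbdd : BddBelow (Set.range f))
    (p : ℝ) (hp : 2 < p)
    (lam : ℕ → ℝ) (hlam : ∀ k, 0 < lam k)
    (b : ℕ) (hb : 1 ≤ b)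
    (θ : ℝ) (hθ0 : 0 < θ) (hθ1 : θ ≤ 1)
    (hθ : θ = 1 / (1 + (b : ℝ)))
    (x₀ : E) (Δ : ℝ) (hΔ : Δ = f x₀ - ⨅ y, f y)
    (x g s : ℕ → Ω → E)
    (hx0 : ∀ ω, x 0 ω = x₀)
    (hs : ∀ k ω, s k ω = if g k ω = 0 then 0
      else -((lam k * ‖g k ω‖ ^ (p - 2)) ^ (-(1 : ℝ) / (p - 1))) • g k ω)
    (hx : ∀ k ω, x (k + 1) ω = x k ω + s k ω)
    -- variance-free PAGE error recursion with `e_k := ‖g_k − ∇f(x_k)‖`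
    (herr : ∀ i, (∫ ω, (‖g (i + 1) ω - f' (x (i + 1) ω)‖ ^ 2 -
          (1 - θ) * ‖g i ω - f' (x i ω)‖ ^ 2)) ≤
        L ^ 2 * ((1 - θ) / (b : ℝ)) * ∫ ω, ‖s i ω‖ ^ 2)
    (herr0 : ∀ ω, ‖g 0 ω - f' (x 0 ω)‖ = 0)
    -- all expectations appearing are assumed finite
    (hint_f : ∀ k, Integrable fun ω => f (x k ω))
    (hint_grad : ∀ k, Integrable fun ω => ‖f' (x k ω)‖)
    (hint_err : ∀ k, Integrable fun ω => ‖g k ω - f' (x k ω)‖ ^ 2)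
    (hint_s2 : ∀ k, Integrable fun ω => ‖s k ω‖ ^ 2)
    (hint_s : ∀ k, Integrable fun ω => ‖s k ω‖ ^ p)
    (k : ℕ) (hk : 1 ≤ k) :
    (1 / (k : ℝ)) * ∑ i ∈ Finset.range k, ∫ ω, ‖f' (x i ω)‖ ≤
      2 / (k : ℝ) * (∑ i ∈ Finset.range k, lam i) ^ ((1 : ℝ) / p) *
        (2 * Δ + 4 * L * ∑ i ∈ Finset.range k, (4 * L / lam i) ^ (2 / (p - 2))) ^
          ((p - 1) / p) :=
  hor_page_rate_general_exact_general f f' hf L hL hlip hbdd p hp lam hlam b θ hθ x₀ Δ hΔ x g s hx0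
    hs hx herr herr0 hint_f hint_grad hint_err hint_s2 hint_s k
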